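/- Let p be a prime and n a positive integer. If A ⊆ ℤ_p × ℤ_{p^n} is a spectral set with |A| > p^n, then A = ℤ_p × ℤ_{p^n}. -/

import Mathlib

open Complex Pointwise

/-- The inner product on `ℤ_p × ℤ_{p^n}`: `⟨u,v⟩ = p^(n-1)·u₁·v₁ + u₂·v₂` in `ℤ_{p^n}`. -/
def inn (p n : ℕ) (u v : ZMod p × ZMod (p ^ n)) : ZMod (p ^ n) :=
  (p : ZMod (p ^ n)) ^ (n - 1) * (u.1.val : ZMod (p ^ n)) * (v.1.val : ZMod (p ^ n)) +
    u.2 * v.2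

/-- The character `χ_g(h) = e^(2πi⟨g,h⟩/p^n)`. -/
noncomputable def chi (p n : ℕ) (g h : ZMod p × ZMod (p ^ n)) : ℂ :=
  Complex.exp (2 * Real.pi * Complex.I * ((inn p n g h).val : ℂ) / ((p : ℂ) ^ n))

/-- `χ_g(A) = Σ_{a ∈ A} χ_g(a)`. -/
noncomputable def chiSum (p n : ℕ) (g : ZMod p × ZMod (p ^ n))
    (A : Finset (ZMod p × ZMod (p ^ n))) : ℂ :=
  ∑ a ∈ A, chi p n g a

/-- The zero set `Z_A = {g : χ_g(A) = 0}`. -/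
def zeroSet (p n : ℕ) (A : Finset (ZMod p × ZMod (p ^ n))) :
    Set (ZMod p × ZMod (p ^ n)) :=
  {g | chiSum p n g A = 0}

/-- `(A,B)` is a spectral pair: `|A| = |B|` and `χ_{b-b'}(A) = 0` for distinct `b,b' ∈ B`. -/
def SpectralPair (p n : ℕ) (A B : Finset (ZMod p × ZMod (p ^ n))) : Prop :=
  A.card = B.card ∧ ∀ b ∈ B, ∀ b' ∈ B, b ≠ b' → chiSum p n (b - b') A = 0

/-- `A` is a spectral set: some `B` makes `(A,B)` a spectral pair. -/
def SpectralSet (p n : ℕ) (A : Finset (ZMod p × ZMod (p ^ n))) : Prop :=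
  ∃ B : Finset (ZMod p × ZMod (p ^ n)), SpectralPair p n A B

/-- `(A,T)` is a tiling pair: every `g` has a unique representation `g = a + t`, `a ∈ A`, `t ∈ T`. -/
def TilingPair (p n : ℕ) (A T : Finset (ZMod p × ZMod (p ^ n))) : Prop :=
  ∀ g : ZMod p × ZMod (p ^ n),
    ∃! x : (ZMod p × ZMod (p ^ n)) × (ZMod p × ZMod (p ^ n)),
      x.1 ∈ A ∧ x.2 ∈ T ∧ g = x.1 + x.2

/-- `A` tiles `ℤ_p × ℤ_{p^n}` by translation. -/
def Tiles (p n : ℕ) (A : Finset (ZMod p × ZMod (p ^ n))) : Prop :=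
  ∃ T : Finset (ZMod p × ZMod (p ^ n)), TilingPair p n A T

/-!
Fix `g ≠ 0`. As `[G : ⟨g⟩] · |⟨p • g⟩| = p^n < |B|`, pigeonhole over the cosets of `⟨g⟩` gives
`b ≠ b'` in `B` with `b - b' ∈ ⟨g⟩ \ ⟨p • g⟩`, i.e. `b - b' = m • g` with `p ∤ m`, so
`χ_{m • g}(A) = 0`. Since `χ_{m • g}(A)` and `χ_g(A)` are the values of one rational polynomial at
the conjugate primitive roots `ζ^m` and `ζ`, also `χ_g(A) = 0`. Thus the Fourier transform of `1_A`
vanishes off `0`, so `1_A` is constant.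
-/

section Pigeonhole

variable {G : Type*} [AddCommGroup G] [Finite G]

theorem AddSubgroup.exists_sub_mem_sub_notMem_of_index_mul_card_lt {H K : AddSubgroup G}
    (B : Finset G) (hB : H.index * Nat.card K < B.card) :
    ∃ b ∈ B, ∃ b' ∈ B, b - b' ∈ H ∧ b - b' ∉ K := by
  classical
  by_contra! hBK
  have := Fintype.ofFinite (G ⧸ H)
  let π : G → G ⧸ H := QuotientAddGroup.mk
  have hfiber : ∀ c ∈ B.image π, (B.filter fun x => π x = c).card ≤ Nat.card K := by
    intro c hc
    obtain ⟨b₀, hb₀, rfl⟩ := Finset.mem_image.mp hc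
    calc (B.filter fun x => π x = π b₀).card
        = ((B.filter fun x => π x = π b₀).image (· - b₀)).card :=
          (Finset.card_image_of_injective _ sub_left_injective).symm
      _ ≤ Nat.card K := by
          rw [← Set.ncard_coe_finset]
          refine (Set.ncard_le_ncard ?_ (Set.toFinite _)).trans_eq
            (Nat.card_coe_set_eq (K : Set G)).symm
          simp only [Finset.coe_image, Set.image_subset_iff, Finset.coe_filter]
          rintro x ⟨hx, hxb₀⟩
          refine hBK x hx b₀ hb₀ ?_
          rw [← neg_add_eq_sub]; exact QuotientAddGroup.eq.mp hxb₀.symm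
  have hcard := Finset.card_le_mul_card_image B _ hfiber
  have himage : (B.image π).card ≤ H.index := by
    rw [AddSubgroup.index, Nat.card_eq_fintype_card]; exact Finset.card_le_univ _
  exact hB.not_ge ((hcard.trans (Nat.mul_le_mul_left _ himage)).trans_eq (mul_comm _ _))

end Pigeonhole

section PGroup

variable {G : Type*} [AddCommGroup G] {p k : ℕ}

theorem index_zmultiples_mul_card_zmultiples_nsmul (hp : p.Prime)
    (hG : Nat.card G = p ^ (k + 1)) {g : G} (hg : g ≠ 0) :
    (AddSubgroup.zmultiples g).index * Nat.card (AddSubgroup.zmultiples (p • g)) = p ^ k := by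
  have hpg : p ∣ addOrderOf g := by
    obtain ⟨i, -, hi⟩ := (Nat.dvd_prime_pow hp).mp (hG ▸ addOrderOf_dvd_natCard g)
    rcases i with _ | i
    · exact absurd (AddMonoid.addOrderOf_eq_one_iff.mp (by simpa using hi)) hg
    · exact hi ▸ dvd_pow_self p i.succ_ne_zero
  refine Nat.eq_of_mul_eq_mul_right hp.pos ?_
  rw [Nat.card_zmultiples, addOrderOf_nsmul_of_dvd hp.ne_zero hpg, mul_assoc,
    Nat.div_mul_cancel hpg, ← Nat.card_zmultiples, AddSubgroup.index_mul_card, hG, pow_succ]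

theorem exists_sub_eq_nsmul_of_card_lt [Finite G] (hp : p.Prime)
    (hG : Nat.card G = p ^ (k + 1)) (B : Finset G) (hB : p ^ k < B.card) {g : G} (hg : g ≠ 0) :
    ∃ b ∈ B, ∃ b' ∈ B, b ≠ b' ∧ ∃ m : ℕ, ¬ p ∣ m ∧ b - b' = m • g := by
  obtain ⟨b, hb, b', hb', hH, hK⟩ :=
    AddSubgroup.exists_sub_mem_sub_notMem_of_index_mul_card_lt (H := .zmultiples g)
      (K := .zmultiples (p • g)) B (by rwa [index_zmultiples_mul_card_zmultiples_nsmul hp hG hg])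
  obtain ⟨m, hm⟩ := (AddSubmonoid.mem_multiples_iff _ _).mp
    ((isOfFinAddOrder_of_finite g).mem_multiples_iff_mem_zmultiples.mpr hH)
  refine ⟨b, hb, b', hb', fun h => hK (by simp [h]), m, ?_, hm.symm⟩
  rintro ⟨t, rfl⟩
  exact hK ⟨t, by simp only [← hm, natCast_zsmul, mul_nsmul, smul_comm t p]⟩

end PGroup

open Polynomial in
theorem IsPrimitiveRoot.aeval_eq_zero_of_aeval_eq_zero {K : Type*} [Field K] [CharZero K]
    {N : ℕ} (hN : 0 < N) {ζ ζ' : K} (hζ : IsPrimitiveRoot ζ N) (hζ' : IsPrimitiveRoot ζ' N)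
    {P : ℚ[X]} (h : aeval ζ' P = 0) : aeval ζ P = 0 := by
  obtain ⟨R, rfl⟩ := minpoly.dvd ℚ ζ' h
  rw [← cyclotomic_eq_minpoly_rat hζ' hN, cyclotomic_eq_minpoly_rat hζ hN, map_mul,
    minpoly.aeval, zero_mul]

namespace ZMod

variable {N : ℕ} [NeZero N]

theorem stdAddChar_eq_pow_val (j : ZMod N) :
    stdAddChar j = stdAddChar (1 : ZMod N) ^ j.val := by
  rw [← AddChar.map_nsmul_eq_pow, nsmul_one, natCast_zmod_val]

theorem isPrimitiveRoot_stdAddChar_one :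
    IsPrimitiveRoot (stdAddChar (1 : ZMod N)) N := by
  refine ⟨?_, fun l hl => ?_⟩
  · rw [← AddChar.map_nsmul_eq_pow, nsmul_one, natCast_self, AddChar.map_zero_eq_one]
  · rwa [← AddChar.map_nsmul_eq_pow, nsmul_one, ← AddChar.map_zero_eq_one (stdAddChar (N := N)),
      injective_stdAddChar.eq_iff, natCast_eq_zero_iff] at hl

end ZMod

section Characters

variable {p n : ℕ}

theorem inn_comm (u v : ZMod p × ZMod (p ^ n)) : inn p n u v = inn p n v u := by
  unfold inn; ring

theorem pow_pred_mul_natCast_mod (hn : 1 ≤ n) (k : ℕ) :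
    (p : ZMod (p ^ n)) ^ (n - 1) * ((k % p : ℕ) : ZMod (p ^ n)) =
      (p : ZMod (p ^ n)) ^ (n - 1) * k := by
  have hpn : (p : ZMod (p ^ n)) ^ (n - 1) * p = 0 := by
    rw [← pow_succ, Nat.sub_add_cancel hn, ← Nat.cast_pow, ZMod.natCast_self]
  conv_rhs => rw [← Nat.div_add_mod k p]
  push_cast
  linear_combination -((k / p : ℕ) : ZMod (p ^ n)) * hpn

variable [NeZero p]

theorem inn_add_left (hn : 1 ≤ n) (u u' v : ZMod p × ZMod (p ^ n)) :
    inn p n (u + u') v = inn p n u v + inn p n u' v := by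
  simp only [inn, Prod.fst_add, Prod.snd_add, ZMod.val_add,
    mul_right_comm _ _ ((v.1.val : ℕ) : ZMod (p ^ n)), pow_pred_mul_natCast_mod hn]
  push_cast
  ring

theorem inn_add_right (hn : 1 ≤ n) (u v v' : ZMod p × ZMod (p ^ n)) :
    inn p n u (v + v') = inn p n u v + inn p n u v' := by
  simp only [inn_comm u, inn_add_left hn]

def innLeft (hn : 1 ≤ n) (v : ZMod p × ZMod (p ^ n)) : ZMod p × ZMod (p ^ n) →+ ZMod (p ^ n) :=
  AddMonoidHom.mk' (inn p n · v) (inn_add_left hn · · v)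

theorem exists_inn_ne_zero (hn : 1 ≤ n) {x : ZMod p × ZMod (p ^ n)} (hx : x ≠ 0) :
    ∃ g, inn p n g x ≠ 0 := by
  by_cases hx₂ : x.2 = 0
  · have hx₁ : x.1 ≠ 0 := fun h => hx (Prod.ext h hx₂)
    have hp₁ : p ≠ 1 := ZMod.nontrivial_iff.mp (nontrivial_of_ne _ _ hx₁)
    refine ⟨(1, 0), fun h => ?_⟩
    have hval : 0 < x.1.val := Nat.pos_of_ne_zero ((ZMod.val_ne_zero _).mpr hx₁)
    simp only [inn, ZMod.val_one'' hp₁, Nat.cast_one, mul_one, zero_mul, add_zero, hx₂] at h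
    rw [← Nat.cast_pow, ← Nat.cast_mul, ZMod.natCast_eq_zero_iff] at h
    conv at h => lhs; rw [← Nat.sub_add_cancel hn, pow_succ]
    exact absurd (Nat.le_of_dvd hval (Nat.dvd_of_mul_dvd_mul_left (pow_pos (NeZero.pos p) _) h))
      (not_le.mpr (ZMod.val_lt x.1))
  · exact ⟨(0, 1), by simpa [inn] using hx₂⟩

theorem chi_eq_stdAddChar (g h : ZMod p × ZMod (p ^ n)) :
    chi p n g h = ZMod.stdAddChar (inn p n g h) := by
  rw [chi, ZMod.stdAddChar_apply, ZMod.toCircle_apply]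
  push_cast
  ring_nf

theorem chi_zero_left (h : ZMod p × ZMod (p ^ n)) : chi p n 0 h = 1 := by
  simp [chi_eq_stdAddChar, inn]

theorem chi_add_right (hn : 1 ≤ n) (g a b : ZMod p × ZMod (p ^ n)) :
    chi p n g (a + b) = chi p n g a * chi p n g b := by
  simp only [chi_eq_stdAddChar, inn_add_right hn, AddChar.map_add_eq_mul]

theorem sum_chi_eq_zero (hn : 1 ≤ n) {x : ZMod p × ZMod (p ^ n)} (hx : x ≠ 0) :
    ∑ g, chi p n g x = 0 := by
  let ψ := (ZMod.stdAddChar (N := p ^ n)).compAddMonoidHom (innLeft hn x)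
  have hψ : ψ ≠ 0 := by
    obtain ⟨g, hg⟩ := exists_inn_ne_zero hn hx
    refine AddChar.ne_zero_iff.mpr ⟨g, fun h => hg ?_⟩
    rwa [AddChar.compAddMonoidHom_apply,
      ← AddChar.map_zero_eq_one (ZMod.stdAddChar (N := p ^ n)),
      ZMod.injective_stdAddChar.eq_iff] at h
  calc ∑ g, chi p n g x = ∑ g, ψ g := by simp only [chi_eq_stdAddChar]; rfl
    _ = 0 := AddChar.sum_eq_zero_iff_ne_zero.mpr hψ

theorem chiSum_eq_zero_of_nsmul (hp : p.Prime) (hn : 1 ≤ n) {m : ℕ} (hm : ¬ p ∣ m)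
    (A : Finset (ZMod p × ZMod (p ^ n))) (g : ZMod p × ZMod (p ^ n))
    (h : chiSum p n (m • g) A = 0) : chiSum p n g A = 0 := by
  let ζ : ℂ := ZMod.stdAddChar (1 : ZMod (p ^ n))
  have hζ : IsPrimitiveRoot ζ (p ^ n) := ZMod.isPrimitiveRoot_stdAddChar_one
  let P : Polynomial ℚ := ∑ a ∈ A, Polynomial.X ^ (inn p n g a).val
  have haeval (z : ℂ) : Polynomial.aeval z P = ∑ a ∈ A, z ^ (inn p n g a).val := by
    simp [P]
  have hchi (a) : chi p n (m • g) a = (ζ ^ m) ^ (inn p n g a).val := by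
    rw [chi_eq_stdAddChar,
      show inn p n (m • g) a = m • inn p n g a from map_nsmul (innLeft hn a) m g,
      AddChar.map_nsmul_eq_pow, ZMod.stdAddChar_eq_pow_val, ← pow_mul, ← pow_mul, mul_comm]
  have hcop : m.Coprime (p ^ n) :=
    (Nat.coprime_comm.mp (hp.coprime_iff_not_dvd.mpr hm)).pow_right n
  have hP := hζ.aeval_eq_zero_of_aeval_eq_zero (pow_pos hp.pos n) (hζ.pow_of_coprime m hcop)
    (P := P) (by rwa [haeval, ← Finset.sum_congr rfl fun a _ => hchi a])
  rwa [haeval, ← Finset.sum_congr rfl fun a _ => ZMod.stdAddChar_eq_pow_val _,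
    ← Finset.sum_congr rfl fun a _ => chi_eq_stdAddChar g a] at hP

theorem coe_eq_univ_of_chiSum_eq_zero (hn : 1 ≤ n) {A : Finset (ZMod p × ZMod (p ^ n))}
    (hA : A.Nonempty) (hzero : ∀ g ≠ 0, chiSum p n g A = 0) :
    (A : Set (ZMod p × ZMod (p ^ n))) = Set.univ := by
  refine Set.eq_univ_of_forall fun x => by_contra fun hx => hA.card_pos.ne' ?_
  have hsum : (A.card : ℂ) = ∑ g, chi p n g (-x) * chiSum p n g A := by
    rw [Fintype.sum_eq_single 0 fun g hg => by rw [hzero g hg, mul_zero]]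
    simp [chiSum, chi_zero_left]
  exact_mod_cast hsum.trans <| calc
    ∑ g, chi p n g (-x) * chiSum p n g A = ∑ g, ∑ a ∈ A, chi p n g (a - x) := by
      simp only [chiSum, Finset.sum_mul, sub_eq_add_neg, chi_add_right hn,
        mul_comm (chi p n _ (-x))]
    _ = ∑ a ∈ A, ∑ g, chi p n g (a - x) := Finset.sum_comm
    _ = 0 := Finset.sum_eq_zero fun a ha =>
      sum_chi_eq_zero hn (sub_ne_zero.mpr fun hax => hx (hax ▸ ha))

end Characters

/-- A spectral set of size `> p^n` is the whole group. -/
theorem eq_univ_of_spectral_card_gt (p n : ℕ) (hp : p.Prime) (hn : 1 ≤ n)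
    (A : Finset (ZMod p × ZMod (p ^ n))) (hA : SpectralSet p n A)
    (hcard : p ^ n < A.card) :
    (A : Set (ZMod p × ZMod (p ^ n))) = Set.univ := by
  have : NeZero p := ⟨hp.ne_zero⟩
  obtain ⟨B, hAB, hB⟩ := hA
  have hG : Nat.card (ZMod p × ZMod (p ^ n)) = p ^ (n + 1) := by
    rw [Nat.card_prod, Nat.card_zmod, Nat.card_zmod, pow_succ']
  refine coe_eq_univ_of_chiSum_eq_zero hn (Finset.card_pos.mp (by omega)) fun g hg => ?_
  obtain ⟨b, hb, b', hb', hne, m, hm, hbb'⟩ :=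
    exists_sub_eq_nsmul_of_card_lt hp hG B (hAB ▸ hcard) hg
  exact chiSum_eq_zero_of_nsmul hp hn hm A g (hbb' ▸ hB b hb b' hb' hne)
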